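/- arXiv:1302.3519 — 2 statements merged into one kernel-verified Lean document; each statement's English description precedes it below -/
import Mathlib

section
/- Let (S,∨,∧) be a set with two binary operations. Then S satisfies the skew lattice axioms together with right-handedness (x∧y∧x = y∧x and x∨y∨x = x∨y) and both middle-distributivity identities (x∧(y∨z)∧x = (x∧y∧x)∨(x∧z∧x) and x∨(y∧z)∨x = (x∨y∨x)∧(x∨z∨x)) if and only if S satisfies: associativity of ∧ and ∨, the absorption laws (y∨x)∧x = x and x∨(x∧y) = x, the identities (x∨y)∧x = x and x∨(y∧x) = x, and the distributivity identities (x∨y)∧z = (x∧z)∨(y∧z) and x∨(y∧z) = (x∨y)∧(x∨z). -/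
/-!
In a right-handed skew lattice `x ∧ (y ∨ z) ∧ x = (y ∨ z) ∧ x` and `x ∨ (y ∧ z) ∨ x = x ∨ (y ∧ z)`,
so the middle-distributive laws are exactly the one-sided distributive laws, and the absorption
laws of either system follow from those of the other once idempotence is available.
The one real step is recovering `x ∧ y ∧ x = y ∧ x` from the second system: for `u = y ∧ x` and
`v = x ∧ y ∧ x`, distributivity gives `u ∨ v = (y ∨ x) ∧ u = u` and associativity gives
`u ∧ v = u`, whence `v = (u ∨ v) ∧ v = u ∧ v = u`.
-/

/-- The skew lattice axioms for two binary operations `mt` (∧) and `jn` (∨):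
associativity of both operations, and the four absorption laws
(y∧x)∨x = x, x∧(x∨y) = x, (y∨x)∧x = x, x∨(x∧y) = x. -/
def SkewLatticeAxioms {S : Type*} (mt jn : S → S → S) : Prop :=
  (∀ x y z : S, mt x (mt y z) = mt (mt x y) z) ∧
  (∀ x y z : S, jn x (jn y z) = jn (jn x y) z) ∧
  (∀ x y : S, jn (mt y x) x = x) ∧
  (∀ x y : S, mt x (jn x y) = x) ∧
  (∀ x y : S, mt (jn y x) x = x) ∧
  (∀ x y : S, jn x (mt x y) = x)

section

variable {S : Type*} {mt jn : S → S → S}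

theorem SkewLatticeAxioms.mt_self (h : SkewLatticeAxioms mt jn) (x : S) : mt x x = x := by
  obtain ⟨-, -, hab1, -, hab3, -⟩ := h
  simpa only [hab1] using hab3 x (mt x x)

theorem SkewLatticeAxioms.jn_self (h : SkewLatticeAxioms mt jn) (x : S) : jn x x = x := by
  obtain ⟨-, -, -, hab2, -, hab4⟩ := h
  simpa only [hab2] using hab4 x (jn x x)

theorem SkewLatticeAxioms.mt_jn_self_left (h : SkewLatticeAxioms mt jn)
    (hR : ∀ x y : S, mt (mt x y) x = mt y x) (x y : S) : mt (jn x y) x = x := by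
  have hab2 : ∀ x y : S, mt x (jn x y) = x := h.2.2.2.1
  rw [← hR x (jn x y), hab2, h.mt_self]

theorem SkewLatticeAxioms.jn_mt_self_right (h : SkewLatticeAxioms mt jn)
    (hR : ∀ x y : S, jn (jn x y) x = jn x y) (x y : S) : jn x (mt y x) = x := by
  have hB : ∀ x y z : S, jn x (jn y z) = jn (jn x y) z := h.2.1
  have hab1 : ∀ x y : S, jn (mt y x) x = x := h.2.2.1
  rw [← hR x (mt y x), ← hB, hab1, h.jn_self]

theorem mt_middle_distrib_iff (hR : ∀ x y : S, mt (mt x y) x = mt y x) :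
    (∀ x y z : S, mt (mt x (jn y z)) x = jn (mt (mt x y) x) (mt (mt x z) x)) ↔
      ∀ x y z : S, mt (jn x y) z = jn (mt x z) (mt y z) := by
  simp only [hR]
  exact ⟨fun h x y z => h z x y, fun h x y z => h y z x⟩

theorem jn_middle_distrib_iff (hR : ∀ x y : S, jn (jn x y) x = jn x y) :
    (∀ x y z : S, jn (jn x (mt y z)) x = mt (jn (jn x y) x) (jn (jn x z) x)) ↔
      ∀ x y z : S, jn x (mt y z) = mt (jn x y) (jn x z) := by
  simp only [hR]

theorem mt_self_of_absorption (hE : ∀ x y : S, mt (jn x y) x = x)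
    (hD : ∀ x y : S, jn x (mt x y) = x) (x : S) : mt x x = x := by
  simpa only [hD] using hE x (mt x x)

theorem jn_self_of_absorption (hC : ∀ x y : S, mt (jn y x) x = x)
    (hF : ∀ x y : S, jn x (mt y x) = x) (x : S) : jn x x = x := by
  simpa only [hC] using hF x (jn x x)

theorem jn_mt_self_left_of_distrib (hC : ∀ x y : S, mt (jn y x) x = x)
    (hG : ∀ x y z : S, mt (jn x y) z = jn (mt x z) (mt y z)) (hmt : ∀ x : S, mt x x = x)
    (x y : S) : jn (mt y x) x = x := by
  simpa only [hC, hmt, eq_comm] using hG y x x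

theorem mt_jn_self_of_distrib (hD : ∀ x y : S, jn x (mt x y) = x)
    (hH : ∀ x y z : S, jn x (mt y z) = mt (jn x y) (jn x z)) (hjn : ∀ x : S, jn x x = x)
    (x y : S) : mt x (jn x y) = x := by
  simpa only [hD, hjn, eq_comm] using hH x x y

theorem jn_right_handed_of_absorption (hD : ∀ x y : S, jn x (mt x y) = x)
    (hE : ∀ x y : S, mt (jn x y) x = x) (x y : S) : jn (jn x y) x = jn x y := by
  simpa only [hE] using hD (jn x y) x

theorem eq_of_jn_eq_of_mt_eq (hC : ∀ x y : S, mt (jn y x) x = x) {u v : S}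
    (hj : jn u v = u) (hm : mt u v = u) : u = v :=
  calc u = mt (jn u v) v := by rw [hj, hm]
    _ = v := hC v u

theorem mt_right_handed_of_distrib (hA : ∀ x y z : S, mt x (mt y z) = mt (mt x y) z)
    (hC : ∀ x y : S, mt (jn y x) x = x) (hE : ∀ x y : S, mt (jn x y) x = x)
    (hG : ∀ x y z : S, mt (jn x y) z = jn (mt x z) (mt y z)) (hmt : ∀ x : S, mt x x = x)
    (x y : S) : mt (mt x y) x = mt y x := by
  have hj : jn (mt y x) (mt x (mt y x)) = mt y x :=
    calc jn (mt y x) (mt x (mt y x)) = mt (jn y x) (mt y x) := by rw [hG, hA y y, hmt]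
      _ = mt y x := by rw [hA, hE]
  have hm : mt (mt y x) (mt x (mt y x)) = mt y x := by
    rw [hA, ← hA y x x, hmt, hmt]
  rw [← hA]
  exact (eq_of_jn_eq_of_mt_eq hC hj hm).symm

end

/-- The skew lattice axioms together with right-handedness (`x∧y∧x = y∧x`, `x∨y∨x = x∨y`)
and both middle-distributivity identities hold iff: associativity of ∧ and ∨,
the absorption laws (y∨x)∧x = x and x∨(x∧y) = x, the identities (x∨y)∧x = x and
x∨(y∧x) = x, and the distributivity identities (x∨y)∧z = (x∧z)∨(y∧z) and
x∨(y∧z) = (x∨y)∧(x∨z) all hold. -/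
theorem right_handed_distributive_characterization
    {S : Type*} (mt jn : S → S → S) :
    (SkewLatticeAxioms mt jn ∧
      (∀ x y : S, mt (mt x y) x = mt y x) ∧
      (∀ x y : S, jn (jn x y) x = jn x y) ∧
      (∀ x y z : S, mt (mt x (jn y z)) x = jn (mt (mt x y) x) (mt (mt x z) x)) ∧
      (∀ x y z : S, jn (jn x (mt y z)) x = mt (jn (jn x y) x) (jn (jn x z) x))) ↔
    ((∀ x y z : S, mt x (mt y z) = mt (mt x y) z) ∧
      (∀ x y z : S, jn x (jn y z) = jn (jn x y) z) ∧
      (∀ x y : S, mt (jn y x) x = x) ∧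
      (∀ x y : S, jn x (mt x y) = x) ∧
      (∀ x y : S, mt (jn x y) x = x) ∧
      (∀ x y : S, jn x (mt y x) = x) ∧
      (∀ x y z : S, mt (jn x y) z = jn (mt x z) (mt y z)) ∧
      (∀ x y z : S, jn x (mt y z) = mt (jn x y) (jn x z))) := by
  constructor
  · rintro ⟨hSL, hRm, hRj, hMm, hMj⟩
    obtain ⟨hA, hB, -, -, hC, hD⟩ := id hSL
    exact ⟨hA, hB, hC, hD, hSL.mt_jn_self_left hRm, hSL.jn_mt_self_right hRj,
      (mt_middle_distrib_iff hRm).1 hMm, (jn_middle_distrib_iff hRj).1 hMj⟩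
  · rintro ⟨hA, hB, hC, hD, hE, hF, hG, hH⟩
    have hmt := mt_self_of_absorption hE hD
    have hjn := jn_self_of_absorption hC hF
    have hRm := mt_right_handed_of_distrib hA hC hE hG hmt
    have hRj := jn_right_handed_of_absorption hD hE
    exact ⟨⟨hA, hB, jn_mt_self_left_of_distrib hC hG hmt, mt_jn_self_of_distrib hD hH hjn, hC, hD⟩,
      hRm, hRj, (mt_middle_distrib_iff hRm).2 hG, (jn_middle_distrib_iff hRj).2 hH⟩
end

section
/- Let S be a skew lattice and let x, x', y, y' ∈ S with x D x', y D y', x ⪰ y, and x ⪰ y' (so x, x' lie in a D-class above the D-class of y, y'). If x∧y∧x = x∧y'∧x, then x'∧y∧x' = x'∧y'∧x'. (Equivalently: if some element of the upper class identifies y and y' by conjugation with ∧, then every element of the upper class does, i.e., y and y' lie in the same coset.) -/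
/-!
Inside a `D`-class the join is the reversed meet, `a ∨ p = p ∧ a`. From this one gets, for
`x D x'` and `x ⪰ b`, that `x' ∧ b = x' ∧ x ∧ b` and `b ∧ x' = b ∧ x ∧ x'`, hence
`x' ∧ b ∧ x' = x' ∧ (x ∧ b ∧ x) ∧ x'`: conjugation by `x'` factors through conjugation
by `x`. The second identity is the first one in the skew lattice with both operations flipped.
-/

structure IsSkewLattice {S : Type*} (mt jn : S → S → S) : Prop where
  mt_assoc : ∀ x y z : S, mt x (mt y z) = mt (mt x y) z
  jn_assoc : ∀ x y z : S, jn x (jn y z) = jn (jn x y) z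
  jn_mt_self_right : ∀ x y : S, jn (mt y x) x = x
  mt_jn_self_left : ∀ x y : S, mt x (jn x y) = x
  mt_jn_self_right : ∀ x y : S, mt (jn y x) x = x
  jn_mt_self_left : ∀ x y : S, jn x (mt x y) = x

def GreenD {S : Type*} (mt : S → S → S) (a b : S) : Prop :=
  mt (mt a b) a = a ∧ mt (mt b a) b = b

namespace IsSkewLattice

variable {S : Type*} {mt jn : S → S → S}

theorem flip (hS : IsSkewLattice mt jn) : IsSkewLattice (_root_.flip mt) (_root_.flip jn) where
  mt_assoc x y z := (hS.mt_assoc z y x).symm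
  jn_assoc x y z := (hS.jn_assoc z y x).symm
  jn_mt_self_right x y := hS.jn_mt_self_left x y
  mt_jn_self_left x y := hS.mt_jn_self_right x y
  mt_jn_self_right x y := hS.mt_jn_self_left x y
  jn_mt_self_left x y := hS.jn_mt_self_right x y

theorem greenD_flip (hS : IsSkewLattice mt jn) {a b : S} (h : GreenD mt a b) :
    GreenD (_root_.flip mt) a b :=
  ⟨(hS.mt_assoc a b a).trans h.1, (hS.mt_assoc b a b).trans h.2⟩

theorem mt_self (hS : IsSkewLattice mt jn) (a : S) : mt a a = a := by
  calc mt a a = mt a (jn a (mt a a)) := by rw [hS.jn_mt_self_left]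
    _ = a := hS.mt_jn_self_left a (mt a a)

theorem mt_eq_left_of_jn_eq_right (hS : IsSkewLattice mt jn) {a b : S} (h : jn a b = b) :
    mt a b = a := by
  rw [← h, hS.mt_jn_self_left]

theorem jn_jn_eq_of_mt_mt_eq (hS : IsSkewLattice mt jn) {a b : S} (h : mt (mt b a) b = b) :
    jn (jn a b) a = a := by
  have hba : jn (mt b a) b = mt b a := by
    simpa only [h] using hS.jn_mt_self_left (mt b a) b
  have hba' : jn (mt b a) (jn b a) = a := by
    rw [hS.jn_assoc, hba, hS.jn_mt_self_right]
  have hab : mt a (jn b a) = jn b a := by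
    simpa only [hba'] using hS.mt_jn_self_right (jn b a) (mt b a)
  rw [← hS.jn_assoc, ← hab, hS.jn_mt_self_left]

theorem jn_eq_mt_of_greenD (hS : IsSkewLattice mt jn) {p a : S} (h : GreenD mt p a) :
    jn a p = mt p a := by
  have hapa : jn (jn a p) a = a := hS.jn_jn_eq_of_mt_mt_eq h.1
  have hpa : mt (jn a p) (mt p a) = mt p a := by
    rw [hS.mt_assoc, hS.mt_jn_self_right]
  have hpa' : jn a (mt p a) = mt p a := by
    simpa only [hS.mt_assoc, h.2] using hS.jn_mt_self_right (mt p a) a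
  calc jn a p = jn (jn a p) (mt (jn a p) (mt p a)) := (hS.jn_mt_self_left _ _).symm
    _ = jn (jn (jn a p) a) (mt p a) := by
      rw [hpa]
      conv_rhs => rw [← hS.jn_assoc, hpa']
    _ = mt p a := by rw [hapa, hpa']

theorem mt_eq_mt_of_greenD (hS : IsSkewLattice mt jn) {p a q : S} (h : GreenD mt p a)
    (haq : mt a q = a) (hqa : jn q a = a) : mt p q = mt p a := by
  have hp : p = mt (mt p a) (mt q p) := by
    rw [hS.mt_assoc, ← hS.mt_assoc p a q, haq, h.1]
  have hpqp : mt (mt p q) p = p := by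
    rw [← hS.mt_assoc]
    nth_rewrite 1 [hp]
    rw [← hS.mt_assoc, hS.mt_self, ← hp]
  have hq : mt q (jn a p) = q :=
    hS.mt_eq_left_of_jn_eq_right (by rw [hS.jn_assoc, hqa])
  calc mt p q = mt p (mt q (jn a p)) := by rw [hq]
    _ = mt (mt (mt p q) p) a := by rw [hS.jn_eq_mt_of_greenD h, hS.mt_assoc, hS.mt_assoc]
    _ = mt p a := by rw [hpqp]

theorem mt_eq_mt_mt_of_greenD (hS : IsSkewLattice mt jn) {x x' b : S} (hx : GreenD mt x' x)
    (hb : jn (jn x b) x = x) : mt x' b = mt (mt x' x) b := by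
  have hxb : mt x' (jn x b) = mt x' x :=
    hS.mt_eq_mt_of_greenD hx (hS.mt_jn_self_left x b) hb
  rw [← hxb, ← hS.mt_assoc, hS.mt_jn_self_right]

theorem conj_eq_conj_conj_of_greenD (hS : IsSkewLattice mt jn) {x x' b : S} (hx : GreenD mt x' x)
    (hb : jn (jn x b) x = x) : mt (mt x' b) x' = mt (mt x' (mt (mt x b) x)) x' := by
  have hleft : mt x' b = mt (mt x' x) b := hS.mt_eq_mt_mt_of_greenD hx hb
  have hright : mt b x' = mt b (mt x x') :=
    hS.flip.mt_eq_mt_mt_of_greenD (hS.greenD_flip hx) (by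
      show jn x (jn b x) = x
      rwa [hS.jn_assoc])
  rw [← hS.mt_assoc, hright, hS.mt_assoc, hleft]
  simp only [hS.mt_assoc]

end IsSkewLattice

theorem skew_lattice_coset_independence_general
    {S : Type*} (mt jn : S → S → S)
    (mt_assoc : ∀ x y z : S, mt x (mt y z) = mt (mt x y) z)
    (jn_assoc : ∀ x y z : S, jn x (jn y z) = jn (jn x y) z)
    (abs1 : ∀ x y : S, jn (mt y x) x = x)
    (abs2 : ∀ x y : S, mt x (jn x y) = x)
    (abs3 : ∀ x y : S, mt (jn y x) x = x)
    (abs4 : ∀ x y : S, jn x (mt x y) = x)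
    (x x' y y' : S)
    (hxx' : mt (mt x x') x = x ∧ mt (mt x' x) x' = x')
    (hxy : jn (jn x y) x = x)
    (hxy' : jn (jn x y') x = x)
    (h : mt (mt x y) x = mt (mt x y') x) :
    mt (mt x' y) x' = mt (mt x' y') x' := by
  have hS : IsSkewLattice mt jn := ⟨mt_assoc, jn_assoc, abs1, abs2, abs3, abs4⟩
  have hx : GreenD mt x' x := hxx'.symm
  rw [hS.conj_eq_conj_conj_of_greenD hx hxy, hS.conj_eq_conj_conj_of_greenD hx hxy', h]

/-- Coset independence in a skew lattice: let x D x', y D y' (where a D b iff a∧b∧a = a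
and b∧a∧b = b), with x ⪰ y and x ⪰ y' (where a ⪰ b iff a∨b∨a = a). If
x∧y∧x = x∧y'∧x then x'∧y∧x' = x'∧y'∧x'. Here `mt` is ∧ and `jn` is ∨. -/
theorem skew_lattice_coset_independence
    {S : Type*} (mt jn : S → S → S)
    (mt_assoc : ∀ x y z : S, mt x (mt y z) = mt (mt x y) z)
    (jn_assoc : ∀ x y z : S, jn x (jn y z) = jn (jn x y) z)
    (abs1 : ∀ x y : S, jn (mt y x) x = x)
    (abs2 : ∀ x y : S, mt x (jn x y) = x)
    (abs3 : ∀ x y : S, mt (jn y x) x = x)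
    (abs4 : ∀ x y : S, jn x (mt x y) = x)
    (x x' y y' : S)
    (hxx' : mt (mt x x') x = x ∧ mt (mt x' x) x' = x')
    (hyy' : mt (mt y y') y = y ∧ mt (mt y' y) y' = y')
    (hxy : jn (jn x y) x = x)
    (hxy' : jn (jn x y') x = x)
    (h : mt (mt x y) x = mt (mt x y') x) :
    mt (mt x' y) x' = mt (mt x' y') x' :=
  skew_lattice_coset_independence_general mt jn mt_assoc jn_assoc abs1 abs2 abs3 abs4 x x' y y' hxx'
    hxy hxy' h
end
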